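/- Let δ, κ, λ > 0, μ ≥ 0, let β be the unique solution in (0, ∞) of tanh(√(2δ)·β) = δ(2κβ − δ)/(κ√(2δ)), set A = −κ/(δ² cosh(√(2δ)β)), and define u : ℝ → ℝ by u(x) = A cosh(√(2δ)x) + (κ/δ)x² + (κ + δμ)/δ² for |x| ≤ β and u(x) = |x| − β + u(β) for |x| > β. Then u(x) > λx² for all |x| ≤ β if and only if one of the following holds: (i) δλ − κ < 0; (ii) δλ − κ = 0 and μ > 0; (iii) δλ − κ > 0 and tanh(√(2δμ/(δλ − κ))) < √(2δμ/(δλ − κ)) − δ²/(κ√(2δ)). Moreover, in that case the equation u(x) = λx² has a unique solution α in (β, ∞), and this solution satisfies α > 1/(2λ). -/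

import Mathlib

/-!
On `[-β, β]` the gap `u x - λ x² = A cosh (√(2δ) x) + (κ/δ - λ) x² + (κ + δμ)/δ²` has `A < 0`,
so by `cosh (θ y) ≤ 1 + θ² (cosh y - 1)` (convexity of `sinh` on `[0, ∞)`) it lies above its chord
as a function of `x²`. It is positive at `0`, hence positive on `[-β, β]` iff it is positive at `β`,
i.e. iff `(κ - δλ) β² + μ > 0`. The free-boundary equation says
`√(2δ) β - tanh (√(2δ) β) = δ²/(κ √(2δ))`, and `y ↦ y - tanh y` is strictly increasing on `[0, ∞)`,
which turns this into the stated trichotomy. Beyond `β`, `u` is affine with slope `1`, so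
`u α = λ α²` is a quadratic equation whose left side is negative at `β`: it has exactly one root
past `β`, and that root lies past the vertex `1/(2λ)`.
-/

open Real Set

namespace Real

lemma convexOn_sinh_Ici : ConvexOn ℝ (Ici 0) sinh := by
  refine MonotoneOn.convexOn_of_deriv (convex_Ici 0) continuous_sinh.continuousOn
    differentiable_sinh.differentiableOn ?_
  rw [Real.deriv_sinh, interior_Ici]
  intro x hx y hy hxy
  rw [cosh_le_cosh, abs_of_pos hx, abs_of_pos (hx.trans_le hxy)]
  exact hxy

lemma sinh_mul_le {θ y : ℝ} (hθ₀ : 0 ≤ θ) (hθ₁ : θ ≤ 1) (hy : 0 ≤ y) :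
    sinh (θ * y) ≤ θ * sinh y := by
  have := convexOn_sinh_Ici.2 (mem_Ici.2 le_rfl) (mem_Ici.2 hy) (sub_nonneg.2 hθ₁) hθ₀ (by ring)
  simpa using this

lemma cosh_eq_one_add_two_mul_sinh_half_sq (y : ℝ) : cosh y = 1 + 2 * sinh (y / 2) ^ 2 := by
  conv_lhs => rw [← mul_div_cancel₀ y two_ne_zero, cosh_two_mul, cosh_sq]
  ring

lemma cosh_mul_le {θ y : ℝ} (hθ₀ : 0 ≤ θ) (hθ₁ : θ ≤ 1) :
    cosh (θ * y) ≤ 1 + θ ^ 2 * (cosh y - 1) := by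
  have hsinh : sinh (θ * |y| / 2) ≤ θ * sinh (|y| / 2) := by
    rw [mul_div_assoc]; exact sinh_mul_le hθ₀ hθ₁ (by positivity)
  have hsinh₀ : 0 ≤ sinh (θ * |y| / 2) := sinh_nonneg_iff.2 (by positivity)
  rw [← cosh_abs, abs_mul, abs_of_nonneg hθ₀, ← cosh_abs y,
    cosh_eq_one_add_two_mul_sinh_half_sq, cosh_eq_one_add_two_mul_sinh_half_sq |y|]
  nlinarith [pow_le_pow_left₀ hsinh₀ hsinh 2]

lemma hasDerivAt_tanh (x : ℝ) : HasDerivAt tanh (1 / cosh x ^ 2) x := by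
  have h := (hasDerivAt_sinh x).div (hasDerivAt_cosh x) (cosh_pos x).ne'
  rw [← sq, ← sq, cosh_sq_sub_sinh_sq] at h
  exact h.congr_of_eventuallyEq (.of_forall fun y => tanh_eq_sinh_div_cosh y)

lemma strictMonoOn_sub_tanh : StrictMonoOn (fun y => y - tanh y) (Ici 0) := by
  have hderiv (x : ℝ) : HasDerivAt (fun y => y - tanh y) (1 - 1 / cosh x ^ 2) x :=
    (hasDerivAt_id x).sub (hasDerivAt_tanh x)
  refine strictMonoOn_of_deriv_pos (convex_Ici 0)
    (fun x _ => (hderiv x).continuousAt.continuousWithinAt) fun x hx => ?_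
  rw [interior_Ici, mem_Ioi] at hx
  rw [(hderiv x).deriv, sub_pos, div_lt_one (by positivity), one_lt_sq_iff₀ (cosh_pos x).le]
  exact one_lt_cosh.2 hx.ne'

end Real

lemma cosh_add_sq_pos_of_abs_le {A c k m β x : ℝ} (hA : A ≤ 0) (hβ : 0 < β)
    (h₀ : 0 < A + m) (h₁ : 0 < A * cosh (c * β) + k * β ^ 2 + m) (hx : |x| ≤ β) :
    0 < A * cosh (c * x) + k * x ^ 2 + m := by
  set θ := |x| / β
  have hθ₀ : 0 ≤ θ := by positivity
  have hθ₁ : θ ≤ 1 := (div_le_one hβ).2 hx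
  have hθβ : θ * β = |x| := div_mul_cancel₀ _ hβ.ne'
  have hcosh : cosh (c * x) = cosh (θ * (c * β)) := by
    rw [show θ * (c * β) = c * |x| by rw [← hθβ]; ring, ← cosh_abs (c * x), ← cosh_abs (c * |x|),
      abs_mul, abs_mul, abs_abs]
  have hx2 : x ^ 2 = θ ^ 2 * β ^ 2 := by rw [← mul_pow, hθβ, sq_abs]
  have hθ2 : θ ^ 2 ≤ 1 := pow_le_one₀ hθ₀ hθ₁
  rw [hcosh, hx2]
  nlinarith [mul_le_mul_of_nonpos_left (cosh_mul_le (y := c * β) hθ₀ hθ₁) hA,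
    mul_nonneg (sub_nonneg.2 hθ2) h₀.le, mul_nonneg (sq_nonneg θ) h₁.le]

lemma add_mul_add_pos_of_quadratic_root {a b c x₀ x : ℝ} (h₀ : a * x₀ ^ 2 + b * x₀ + c < 0)
    (hx : a * x ^ 2 + b * x + c = 0) (hx₀ : x₀ < x) : 0 < a * (x + x₀) + b := by
  have h : (x - x₀) * (a * (x + x₀) + b) = -(a * x₀ ^ 2 + b * x₀ + c) := by
    linear_combination hx
  exact pos_of_mul_pos_right (h ▸ neg_pos.2 h₀) (sub_pos.2 hx₀).le

lemma neg_div_two_mul_lt_of_quadratic_root {a b c x₀ x : ℝ} (ha : 0 < a)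
    (h₀ : a * x₀ ^ 2 + b * x₀ + c < 0) (hx : a * x ^ 2 + b * x + c = 0) (hx₀ : x₀ < x) :
    -b / (2 * a) < x := by
  rw [div_lt_iff₀ (by positivity)]
  nlinarith [add_mul_add_pos_of_quadratic_root h₀ hx hx₀]

lemma existsUnique_quadratic_root_gt {a b c x₀ : ℝ} (ha : 0 < a)
    (h₀ : a * x₀ ^ 2 + b * x₀ + c < 0) : ∃! x, x₀ < x ∧ a * x ^ 2 + b * x + c = 0 := by
  have hdisc : (2 * a * x₀ + b) ^ 2 < discrim a b c := by
    rw [discrim]; nlinarith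
  set r := √(discrim a b c)
  have hr : r ^ 2 = discrim a b c := sq_sqrt ((sq_nonneg _).trans hdisc.le)
  have hr₀ : 2 * a * x₀ + b < r := by
    have := sqrt_lt_sqrt (sq_nonneg _) hdisc
    rw [sqrt_sq_eq_abs] at this
    exact (le_abs_self _).trans_lt this
  set x := (-b + r) / (2 * a)
  have hxr : 2 * a * x + b = r := by simp only [x]; field_simp; ring
  have hx : a * x ^ 2 + b * x + c = 0 := by
    have : 4 * a * (a * x ^ 2 + b * x + c) = 0 := by
      rw [discrim] at hr
      linear_combination (2 * a * x + b + r) * hxr + hr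
    simpa [ha.ne'] using this
  have hx₀ : x₀ < x := by nlinarith
  refine ⟨x, ⟨hx₀, hx⟩, fun y ⟨hy₀, hy⟩ => ?_⟩
  have hfactor : (y - x) * (a * (y + x) + b) = 0 := by linear_combination hy - hx
  have hpos : 0 < a * (y + x) + b := by
    nlinarith [add_mul_add_pos_of_quadratic_root h₀ hy hy₀]
  exact sub_eq_zero.1 ((mul_eq_zero.1 hfactor).resolve_right hpos.ne')

lemma pos_iff_of_tanh_eq {δ κ lam μ β : ℝ} (hδ : 0 < δ) (hκ : 0 < κ) (hμ : 0 ≤ μ) (hβ : 0 < β)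
    (heq : tanh (√(2 * δ) * β) = δ * (2 * κ * β - δ) / (κ * √(2 * δ))) :
    0 < (κ - δ * lam) * β ^ 2 + μ ↔
      (δ * lam - κ < 0 ∨ (δ * lam - κ = 0 ∧ 0 < μ) ∨
        (0 < δ * lam - κ ∧
          tanh (√(2 * δ * μ / (δ * lam - κ))) <
            √(2 * δ * μ / (δ * lam - κ)) - δ ^ 2 / (κ * √(2 * δ)))) := by
  rcases lt_trichotomy (δ * lam - κ) 0 with hd | hd | hd
  · simp only [hd, true_or, iff_true]
    nlinarith [mul_pos (by linarith : 0 < κ - δ * lam) (pow_pos hβ 2)]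
  · simp [hd, show κ - δ * lam = 0 by linarith]
  · simp only [hd.not_gt, hd.ne', hd, false_or, false_and, true_and]
    set s := √(2 * δ)
    have hs : 0 < s := sqrt_pos.2 (by positivity)
    have hs2 : s ^ 2 = 2 * δ := sq_sqrt (by positivity)
    have hβ_root : s * β - tanh (s * β) = δ ^ 2 / (κ * s) := by
      rw [heq]; field_simp; linear_combination κ * β * hs2
    set w := √(2 * δ * μ / (δ * lam - κ))
    rw [lt_sub_comm, ← hβ_root,
      strictMonoOn_sub_tanh.lt_iff_lt (mem_Ici.2 (by positivity)) (mem_Ici.2 (sqrt_nonneg _)),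
      lt_sqrt (by positivity), mul_pow, hs2, lt_div_iff₀ hd]
    constructor <;> intro h <;> nlinarith


lemma existsUnique_root_gt_of_affine {u : ℝ → ℝ} {lam β : ℝ} (hlam : 0 < lam)
    (hu : ∀ y, β < y → u y = y - β + u β) (hβ : lam * β ^ 2 < u β) :
    (∃! α, β < α ∧ u α = lam * α ^ 2) ∧ ∀ α, β < α → u α = lam * α ^ 2 → 1 / (2 * lam) < α := by
  have hquad (y : ℝ) (hy : β < y) : u y = lam * y ^ 2 ↔ lam * y ^ 2 + -1 * y + (β - u β) = 0 := by
    rw [hu y hy]; constructor <;> intro h <;> linarith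
  have hβ_neg : lam * β ^ 2 + -1 * β + (β - u β) < 0 := by linarith
  refine ⟨?_, fun α hα hαu => ?_⟩
  · obtain ⟨α, ⟨hα, hαu⟩, huniq⟩ := existsUnique_quadratic_root_gt hlam hβ_neg
    exact ⟨α, ⟨hα, (hquad α hα).2 hαu⟩, fun y ⟨hy, hyu⟩ => huniq y ⟨hy, (hquad y hy).1 hyu⟩⟩
  · simpa using neg_div_two_mul_lt_of_quadratic_root hlam hβ_neg ((hquad α hα).1 hαu) hα

/-- With `β` the unique positive root of the free-boundary equation,
`A = −κ/(δ² cosh(√(2δ)β))` and `u` the piecewise smooth-fit candidate, one has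
`u(x) > λx²` for all `|x| ≤ β` iff one of the three stated parameter conditions holds;
moreover, in that case the equation `u(x) = λx²` has a unique solution `α ∈ (β, ∞)`,
and this solution satisfies `α > 1/(2λ)`. -/
theorem statement4 (δ κ lam μ β A : ℝ) (hδ : 0 < δ) (hκ : 0 < κ) (hlam : 0 < lam)
    (hμ : 0 ≤ μ) (hβ : 0 < β)
    (heq : Real.tanh (Real.sqrt (2*δ) * β) = δ * (2*κ*β - δ) / (κ * Real.sqrt (2*δ)))
    (hA : A = -κ / (δ^2 * Real.cosh (Real.sqrt (2*δ) * β)))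
    (u : ℝ → ℝ)
    (hu : ∀ x : ℝ, u x =
      if |x| ≤ β then A * Real.cosh (Real.sqrt (2*δ) * x) + (κ/δ) * x^2 + (κ + δ*μ)/δ^2
      else |x| - β + (A * Real.cosh (Real.sqrt (2*δ) * β) + (κ/δ) * β^2 + (κ + δ*μ)/δ^2)) :
    ((∀ x : ℝ, |x| ≤ β → lam * x^2 < u x) ↔
      (δ*lam - κ < 0 ∨ (δ*lam - κ = 0 ∧ 0 < μ) ∨
        (0 < δ*lam - κ ∧
          Real.tanh (Real.sqrt (2*δ*μ/(δ*lam - κ))) <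
            Real.sqrt (2*δ*μ/(δ*lam - κ)) - δ^2/(κ * Real.sqrt (2*δ))))) ∧
    ((∀ x : ℝ, |x| ≤ β → lam * x^2 < u x) →
      (∃! α : ℝ, β < α ∧ u α = lam * α^2) ∧
      (∀ α : ℝ, β < α → u α = lam * α^2 → 1/(2*lam) < α)) := by
  set s := √(2 * δ)
  have hcosh : 1 < cosh (s * β) := one_lt_cosh.2 (by positivity)
  have hA_cosh : A * cosh (s * β) = -κ / δ ^ 2 := by rw [hA]; field_simp
  have hA_neg : A < 0 := by rw [hA]; exact div_neg_of_neg_of_pos (by linarith) (by positivity)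
  have hu_inner (x : ℝ) (hx : |x| ≤ β) :
      u x - lam * x ^ 2 = A * cosh (s * x) + (κ / δ - lam) * x ^ 2 + (κ + δ * μ) / δ ^ 2 := by
    rw [hu, if_pos hx]; ring
  have hu_β : u β = κ / δ * β ^ 2 + μ / δ := by
    rw [hu, if_pos (abs_of_pos hβ).le, hA_cosh]; field_simp; ring
  have hu_outer (y : ℝ) (hy : β < y) : u y = y - β + u β := by
    rw [hu, hu β, if_neg (by rw [abs_of_pos (hβ.trans hy)]; exact hy.not_ge),
      if_pos (abs_of_pos hβ).le, abs_of_pos (hβ.trans hy)]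
  have hgap₀ : 0 < A + (κ + δ * μ) / δ ^ 2 := by
    have hlt : κ / cosh (s * β) < κ + δ * μ :=
      (div_lt_self hκ hcosh).trans_le (le_add_of_nonneg_right (by positivity))
    calc 0 < (κ + δ * μ - κ / cosh (s * β)) / δ ^ 2 := div_pos (sub_pos.2 hlt) (by positivity)
      _ = A + (κ + δ * μ) / δ ^ 2 := by rw [hA]; field_simp; ring
  have hinner_iff : (∀ x, |x| ≤ β → lam * x ^ 2 < u x) ↔ lam * β ^ 2 < u β := by
    refine ⟨fun h => h β (abs_of_pos hβ).le, fun h x hx => sub_pos.1 ?_⟩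
    rw [hu_inner x hx]
    refine cosh_add_sq_pos_of_abs_le hA_neg.le hβ hgap₀ ?_ hx
    rw [← hu_inner β (abs_of_pos hβ).le]; linarith
  have hβ_iff : lam * β ^ 2 < u β ↔ 0 < (κ - δ * lam) * β ^ 2 + μ := by
    have e : κ / δ * β ^ 2 + μ / δ - lam * β ^ 2 = ((κ - δ * lam) * β ^ 2 + μ) / δ := by
      field_simp; ring
    rw [hu_β, ← sub_pos, e, div_pos_iff_of_pos_right hδ]
  exact ⟨hinner_iff.trans (hβ_iff.trans (pos_iff_of_tanh_eq hδ hκ hμ hβ heq)),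
    fun h => existsUnique_root_gt_of_affine hlam hu_outer (hinner_iff.1 h)⟩
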